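/- Let G be an AH-algebra and let g ∈ G with 0 ≤ g. Then g is invertible (i.e., there exists h ∈ G with gh = hg = 1) if and only if there exists M ∈ ℕ such that 1 ≤ M·g. Moreover, if g is invertible, then 0 ≤ g⁻¹ and g⁻¹ ∈ CC(g). -/

import Mathlib

/-- An e-ring `(R,E)`: an associative ring `R` with unity together with a set `E ⊆ R`
of effects, satisfying the Foulis axioms.  `E⁺` is realized as the additive submonoid
closure of `E` (the set of all finite sums of effects). -/
structure ERing (R : Type*) [Ring R] where
  E : Set R
  zero_mem : (0 : R) ∈ E
  one_mem : (1 : R) ∈ E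
  compl_mem : ∀ e ∈ E, 1 - e ∈ E
  epos_i : ∀ a ∈ AddSubmonoid.closure E, -a ∈ AddSubmonoid.closure E → a = 0
  epos_ii : ∀ a ∈ AddSubmonoid.closure E, 1 - a ∈ AddSubmonoid.closure E → a ∈ E
  epos_iii : ∀ a ∈ AddSubmonoid.closure E, ∀ b ∈ AddSubmonoid.closure E,
    a * b = b * a → a * b ∈ AddSubmonoid.closure E
  epos_iv : ∀ a ∈ AddSubmonoid.closure E, ∀ b ∈ AddSubmonoid.closure E,
    a * b * a ∈ AddSubmonoid.closure E
  epos_v : ∀ a ∈ AddSubmonoid.closure E, ∀ b ∈ AddSubmonoid.closure E,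
    a * b * a = 0 → a * b = 0 ∧ b * a = 0
  epos_vi : ∀ a ∈ AddSubmonoid.closure E, ∀ b ∈ AddSubmonoid.closure E,
    (a - b) ^ 2 ∈ AddSubmonoid.closure E
  zero_ne_one : (0 : R) ≠ 1

namespace ERing

variable {R : Type*} [Ring R] (er : ERing R)

/-- `E⁺`, the set of all finite sums of effects; the positive cone of the directed group. -/
def Epos : Set R := (AddSubmonoid.closure er.E : Set R)

/-- The directed group `G = E⁺ - E⁺` of the e-ring. -/
def G : Set R := {g | ∃ a ∈ er.Epos, ∃ b ∈ er.Epos, g = a - b}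

/-- The partial order on the directed group: `g ≤ h` iff `h - g ∈ E⁺`. -/
def le (g h : R) : Prop := h - g ∈ er.Epos

/-- The set of projections `P = {p ∈ G : p = p²}`. -/
def P : Set R := {p | p ∈ er.G ∧ p = p ^ 2}

/-- The commutant in `G` of a subset `A ⊆ G`. -/
def commutant (A : Set R) : Set R := {g | g ∈ er.G ∧ ∀ a ∈ A, g * a = a * g}

/-- The bicommutant in `G` of a subset `A ⊆ G`. -/
def CC (A : Set R) : Set R := er.commutant (er.commutant A)

/-- `s` is the supremum of `A` within the subset `S` (w.r.t. the e-ring order). -/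
def IsSupIn (S A : Set R) (s : R) : Prop :=
  s ∈ S ∧ (∀ a ∈ A, er.le a s) ∧ ∀ b ∈ S, (∀ a ∈ A, er.le a b) → er.le s b

/-- `s` is the infimum of `A` within the subset `S` (w.r.t. the e-ring order). -/
def IsInfIn (S A : Set R) (s : R) : Prop :=
  s ∈ S ∧ (∀ a ∈ A, er.le s a) ∧ ∀ b ∈ S, (∀ a ∈ A, er.le b a) → er.le b s

/-- Quadratic annihilation property. -/
def HasQA : Prop := ∀ g ∈ er.G, ∀ h ∈ er.G, g * h ^ 2 * g = 0 → g * h = 0 ∧ h * g = 0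

/-- Commutative Vigier property: every ascending sequence of pairwise commuting elements
of `G` bounded above in `G` has a supremum in `G` which double commutes with the sequence. -/
def HasCV : Prop :=
  ∀ g : ℕ → R, (∀ n, g n ∈ er.G) → (∀ n, er.le (g n) (g (n + 1))) →
    (∀ m n, g m * g n = g n * g m) → (∃ b ∈ er.G, ∀ n, er.le (g n) b) →
    ∃ s, er.IsSupIn er.G (Set.range g) s ∧ s ∈ er.CC (Set.range g)

/-- `G` is an abstract Hermitian (AH) algebra: there is a semitransparent effect `½`,
`G` has quadratic annihilation, and `G` has the commutative Vigier property. -/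
def IsAH : Prop := (∃ h ∈ er.E, h + h = 1) ∧ er.HasQA ∧ er.HasCV

end ERing


/-!
If `0 ≤ g` has an inverse `h`, then `h² ≥ 0` is bounded by some `K ∈ ℕ`, and
`g (K - h²) g = K g² - 1 ≥ 0` together with `g ≤ N` gives `1 ≤ K N g`.

Conversely, if `1 ≤ M g`, pick a central `c = ½ʳ` with `c k = 1` for a natural `k ≥ M, N`, where
`g ≤ N`. Then `t = 1 - c g` satisfies `0 ≤ t` and `c² ≤ 1 - t`, so the partial sums of the
Neumann series `∑ tⁱ` are bounded by `k²`. By the commutative Vigier property they have a supremum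
`σ ∈ CC(t)`, and `u = 1 - (1 - t) σ` satisfies `0 ≤ u ≤ tⁿ` for all `n`, hence `n u ≤ k²`; the
Archimedean property (again a consequence of the Vigier property) forces `u = 0`. So `c σ` is a
positive inverse of `g` lying in `CC(g)`, and any inverse equals it.
-/

open Finset

namespace ERing

variable {R : Type*} [Ring R] (er : ERing R)

lemma mem_Epos_of_mem_E {e : R} (he : e ∈ er.E) : e ∈ er.Epos :=
  AddSubmonoid.subset_closure he

lemma zero_mem_Epos : (0 : R) ∈ er.Epos := (AddSubmonoid.closure er.E).zero_mem

lemma one_mem_Epos : (1 : R) ∈ er.Epos := er.mem_Epos_of_mem_E er.one_mem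

lemma add_mem_Epos {a b : R} (ha : a ∈ er.Epos) (hb : b ∈ er.Epos) : a + b ∈ er.Epos :=
  (AddSubmonoid.closure er.E).add_mem ha hb

lemma nsmul_mem_Epos {a : R} (ha : a ∈ er.Epos) (n : ℕ) : n • a ∈ er.Epos :=
  AddSubmonoid.nsmul_mem _ ha n

lemma sum_mem_Epos {ι : Type*} (s : Finset ι) {f : ι → R} (hf : ∀ i ∈ s, f i ∈ er.Epos) :
    ∑ i ∈ s, f i ∈ er.Epos :=
  AddSubmonoid.sum_mem _ hf

lemma natCast_mem_Epos (n : ℕ) : (n : R) ∈ er.Epos := by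
  simpa using er.nsmul_mem_Epos er.one_mem_Epos n

lemma mul_mem_Epos {a b : R} (ha : a ∈ er.Epos) (hb : b ∈ er.Epos) (hab : Commute a b) :
    a * b ∈ er.Epos :=
  er.epos_iii a ha b hb hab

lemma pow_mem_Epos {a : R} (ha : a ∈ er.Epos) (n : ℕ) : a ^ n ∈ er.Epos := by
  induction n with
  | zero => simpa using er.one_mem_Epos
  | succ n ih => simpa [pow_succ] using er.mul_mem_Epos ih ha ((Commute.refl a).pow_left n)

lemma mem_G_of_mem_Epos {a : R} (ha : a ∈ er.Epos) : a ∈ er.G :=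
  ⟨a, ha, 0, er.zero_mem_Epos, (sub_zero a).symm⟩

lemma sub_mem_G {a b : R} (ha : a ∈ er.G) (hb : b ∈ er.G) : a - b ∈ er.G := by
  obtain ⟨x, hx, y, hy, rfl⟩ := ha
  obtain ⟨z, hz, w, hw, rfl⟩ := hb
  exact ⟨x + w, er.add_mem_Epos hx hw, y + z, er.add_mem_Epos hy hz, by abel⟩

lemma sq_mem_Epos_of_mem_G {a : R} (ha : a ∈ er.G) : a ^ 2 ∈ er.Epos := by
  obtain ⟨x, hx, y, hy, rfl⟩ := ha
  exact er.epos_vi x hx y hy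

lemma exists_le_natCast {a : R} (ha : a ∈ er.Epos) : ∃ n : ℕ, er.le a n := by
  induction ha using AddSubmonoid.closure_induction with
  | mem x hx => exact ⟨1, by simpa [ERing.le] using er.mem_Epos_of_mem_E (er.compl_mem x hx)⟩
  | zero => exact ⟨0, by simpa [ERing.le] using er.zero_mem_Epos⟩
  | add x y _ _ ihx ihy =>
    obtain ⟨n, hn⟩ := ihx
    obtain ⟨m, hm⟩ := ihy
    refine ⟨n + m, ?_⟩
    have hsum : (n : R) - x + ((m : R) - y) = ((n + m : ℕ) : R) - (x + y) := by push_cast; abel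
    show _ - _ ∈ er.Epos
    exact hsum ▸ er.add_mem_Epos hn hm

lemma eq_zero_of_forall_nsmul_le (hCV : er.HasCV) {u b : R} (hu : u ∈ er.Epos) (hb : b ∈ er.G)
    (h : ∀ n : ℕ, er.le (n • u) b) : u = 0 := by
  obtain ⟨s, ⟨hs, hs_ub, hs_least⟩, -⟩ := hCV (fun n => n • u)
    (fun n => er.mem_G_of_mem_Epos (er.nsmul_mem_Epos hu n))
    (fun n => by show (n + 1) • u - n • u ∈ er.Epos; rwa [succ_nsmul, add_sub_cancel_left])
    (fun m n => (((Commute.refl u).smul_left m).smul_right n).eq) ⟨b, hb, h⟩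
  have hs_le : er.le s (s - u) := by
    refine hs_least _ (er.sub_mem_G hs (er.mem_G_of_mem_Epos hu)) ?_
    rintro _ ⟨n, rfl⟩
    show s - u - n • u ∈ er.Epos
    rw [sub_sub, ← succ_nsmul']
    exact hs_ub _ ⟨n + 1, rfl⟩
  exact er.epos_i u hu (by rwa [ERing.le, sub_sub_cancel_left] at hs_le)

lemma exists_one_le_nsmul_of_mul_eq_one {g h : R} (hg : g ∈ er.Epos) (hh : h ∈ er.G)
    (hgh : g * h = 1) (hhg : h * g = 1) : ∃ M : ℕ, er.le 1 (M • g) := by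
  obtain ⟨K, hK⟩ := er.exists_le_natCast (er.sq_mem_Epos_of_mem_G hh)
  obtain ⟨N, hN⟩ := er.exists_le_natCast hg
  refine ⟨K * N, ?_⟩
  have hKg : g * ((K : R) - h ^ 2) * g = K * (g * g) - 1 := by
    calc g * ((K : R) - h ^ 2) * g = g * K * g - (g * h) * (h * g) := by noncomm_ring
      _ = K * (g * g) - 1 := by rw [hgh, hhg, ← Nat.cast_comm, mul_assoc, one_mul]
  have hNg : ((N : R) - g) * g ∈ er.Epos :=
    er.mul_mem_Epos hN hg ((Nat.cast_commute N g).sub_left (Commute.refl g))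
  have hsplit : (K * N) • g - 1 = K * (((N : R) - g) * g) + (K * (g * g) - 1) := by
    rw [nsmul_eq_mul]; push_cast; noncomm_ring
  show _ - 1 ∈ er.Epos
  rw [hsplit]
  exact er.add_mem_Epos (er.mul_mem_Epos (er.natCast_mem_Epos K) hNg (Nat.cast_commute K _))
    (hKg ▸ er.epos_iv g hg _ hK)

lemma exists_central_mul_natCast_eq_one (hhalf : ∃ e ∈ er.E, e + e = 1) (m : ℕ) :
    ∃ c ∈ er.Epos, (∀ x, Commute c x) ∧ ∃ k : ℕ, m ≤ k ∧ c * k = 1 := by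
  obtain ⟨e, he, hee⟩ := hhalf
  let _ : Invertible (2 : R) := ⟨e, by rw [mul_two, hee], by rw [two_mul, hee]⟩
  have he_central : ∀ x, Commute e x := fun x => (Commute.ofNat_left 2 x).invOf_left
  refine ⟨e ^ m, er.pow_mem_Epos (er.mem_Epos_of_mem_E he) m, fun x => (he_central x).pow_left m,
    2 ^ m, Nat.lt_two_pow_self.le, ?_⟩
  rw [Nat.cast_pow, Nat.cast_ofNat, ← (he_central 2).mul_pow, mul_two, hee, one_pow]

lemma geom_sum_le_natCast {t d : R} (ht : t ∈ er.Epos) (hd : 1 - t - d ∈ er.Epos)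
    (hdt : Commute d t) {B : ℕ} (hBd : (B : R) * d = 1) (n : ℕ) :
    er.le (∑ i ∈ range n, t ^ i) B := by
  have hS : ∑ i ∈ range n, t ^ i ∈ er.Epos := er.sum_mem_Epos _ fun i _ => er.pow_mem_Epos ht i
  have hcomm : Commute (1 - t - d) (∑ i ∈ range n, t ^ i) :=
    Commute.sum_right _ _ _ fun i _ =>
      (((Commute.one_left t).sub_left (Commute.refl t)).sub_left hdt).pow_right i
  -- `B - S = B (1 - d S)` and `1 - d S = tⁿ + (1 - t - d) S`, since `(1 - t) S = 1 - tⁿ`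
  have hsplit : (B : R) - ∑ i ∈ range n, t ^ i =
      B * (t ^ n + (1 - t - d) * ∑ i ∈ range n, t ^ i) := by
    rw [sub_mul, mul_neg_geom_sum, mul_add, mul_sub, mul_sub, mul_one, ← mul_assoc, hBd, one_mul]
    abel
  show _ ∈ er.Epos
  rw [hsplit]
  exact er.mul_mem_Epos (er.natCast_mem_Epos B)
    (er.add_mem_Epos (er.pow_mem_Epos ht n) (er.mul_mem_Epos hd hS hcomm)) (Nat.cast_commute _ _)

lemma eq_zero_of_le_pow (hCV : er.HasCV) {t u b : R} (hu : u ∈ er.Epos) (hb : b ∈ er.G)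
    (hut : ∀ n, er.le u (t ^ n)) (hbound : ∀ n, er.le (∑ i ∈ range n, t ^ i) b) : u = 0 := by
  refine er.eq_zero_of_forall_nsmul_le hCV hu hb fun n => ?_
  have hsplit : b - n • u = (b - ∑ i ∈ range n, t ^ i) + ∑ i ∈ range n, (t ^ i - u) := by
    rw [sum_sub_distrib, sum_const, card_range]; abel
  show _ ∈ er.Epos
  rw [hsplit]
  exact er.add_mem_Epos (hbound n) (er.sum_mem_Epos _ fun i _ => hut i)

lemma le_mul_add_one_of_isSupIn_geom_sum {t σ : R} (ht : t ∈ er.Epos) (hσ : σ ∈ er.Epos)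
    (hσ_sup : er.IsSupIn er.G (Set.range fun n => ∑ i ∈ range n, t ^ i) σ) (htσ : Commute t σ) :
    er.le σ (t * σ + 1) := by
  have htσ1 : t * σ + 1 ∈ er.Epos := er.add_mem_Epos (er.mul_mem_Epos ht hσ htσ) er.one_mem_Epos
  refine hσ_sup.2.2 _ (er.mem_G_of_mem_Epos htσ1) ?_
  rintro _ ⟨n, rfl⟩
  show _ - ∑ i ∈ range n, t ^ i ∈ er.Epos
  cases n with
  | zero => simpa using htσ1
  | succ n =>
    have hsplit : t * σ + 1 - ∑ i ∈ range (n + 1), t ^ i = t * (σ - ∑ i ∈ range n, t ^ i) := by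
      rw [geom_sum_succ, mul_sub]; abel
    rw [hsplit]
    exact er.mul_mem_Epos ht (hσ_sup.2.1 _ ⟨n, rfl⟩)
      (htσ.sub_right (Commute.sum_right _ _ _ fun i _ => (Commute.refl t).pow_right i))

lemma exists_inv_one_sub_of_geom_sum_le (hCV : er.HasCV) {t b : R} (ht : t ∈ er.Epos)
    (ht1 : 1 - t ∈ er.Epos) (hb : b ∈ er.G) (hbound : ∀ n, er.le (∑ i ∈ range n, t ^ i) b) :
    ∃ σ ∈ er.Epos, (1 - t) * σ = 1 ∧ ∀ x ∈ er.G, Commute x t → Commute x σ := by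
  set S : ℕ → R := fun n => ∑ i ∈ range n, t ^ i with hS_def
  have hS : ∀ n, S n ∈ er.Epos := fun n => er.sum_mem_Epos _ fun i _ => er.pow_mem_Epos ht i
  have hS_comm : ∀ x, Commute x t → ∀ n, Commute x (S n) := fun x hx n =>
    Commute.sum_right _ _ _ fun i _ => hx.pow_right i
  have htS : ∀ n, Commute t (S n) := hS_comm t (Commute.refl t)
  obtain ⟨σ, hσ_sup, hσCC⟩ := hCV S (fun n => er.mem_G_of_mem_Epos (hS n))
    (fun n => by
      show S (n + 1) - S n ∈ er.Epos
      simpa only [hS_def, geom_sum_succ', add_sub_cancel_right] using er.pow_mem_Epos ht n)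
    (fun m n => (hS_comm _ (htS m).symm n).eq) ⟨b, hb, hbound⟩
  have hσ_comm : ∀ x ∈ er.G, Commute x t → Commute x σ := fun x hx hxt =>
    (hσCC.2 x ⟨hx, by rintro _ ⟨n, rfl⟩; exact hS_comm x hxt n⟩).symm
  have hσ : σ ∈ er.Epos := by simpa [ERing.le, S] using hσ_sup.2.1 (S 0) ⟨0, rfl⟩
  have htσ : Commute t σ := hσ_comm t (er.mem_G_of_mem_Epos ht) (Commute.refl t)
  -- the defect of `σ` as an inverse of `1 - t` lies between `0` and every `tⁿ`
  set u := 1 - (1 - t) * σ with hu_def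
  have hu : u ∈ er.Epos := by
    have hsplit : u = t * σ + 1 - σ := by rw [hu_def, sub_mul, one_mul]; abel
    rw [hsplit]
    exact er.le_mul_add_one_of_isSupIn_geom_sum ht hσ hσ_sup htσ
  have hu_le_pow : ∀ n, er.le u (t ^ n) := fun n => by
    have hsplit : t ^ n - u = (1 - t) * (σ - S n) := by
      rw [mul_sub, hS_def, mul_neg_geom_sum, hu_def]; abel
    show _ ∈ er.Epos
    rw [hsplit]
    exact er.mul_mem_Epos ht1 (hσ_sup.2.1 _ ⟨n, rfl⟩)
      (((Commute.one_left σ).sub_left htσ).sub_right ((Commute.one_left _).sub_left (htS n)))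
  have hu0 : u = 0 := er.eq_zero_of_le_pow hCV hu hb hu_le_pow hbound
  exact ⟨σ, hσ, (sub_eq_zero.mp hu0).symm, hσ_comm⟩

section CentralScalar

variable {c : R} (hc : c ∈ er.Epos) (hc_central : ∀ x, Commute c x) {k : ℕ} (hck : c * k = 1)
include hc hc_central hck

lemma mul_le_one_of_le_natCast {g : R} {N : ℕ} (hNk : N ≤ k) (hg : er.le g N) :
    er.le (c * g) 1 := by
  have hkg : (k : R) - g ∈ er.Epos := by
    have hsplit : (k : R) - g = ((k - N : ℕ) : R) + (N - g) := by
      rw [Nat.cast_sub hNk]; abel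
    rw [hsplit]
    exact er.add_mem_Epos (er.natCast_mem_Epos _) hg
  have hsplit : 1 - c * g = c * (k - g) := by rw [mul_sub, hck]
  show _ ∈ er.Epos
  rw [hsplit]
  exact er.mul_mem_Epos hc hkg (hc_central _)

lemma le_of_one_le_nsmul {g : R} {M : ℕ} (hMk : M ≤ k) (hg : g ∈ er.Epos)
    (hM : er.le 1 (M • g)) : er.le c g := by
  have hkg : (k : R) * g - 1 ∈ er.Epos := by
    have hsplit : (k : R) * g - 1 = ((k - M : ℕ) : R) * g + (M • g - 1) := by
      rw [Nat.cast_sub hMk, nsmul_eq_mul, sub_mul]; abel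
    rw [hsplit]
    exact er.add_mem_Epos (er.mul_mem_Epos (er.natCast_mem_Epos _) hg (Nat.cast_commute _ g)) hM
  have hsplit : g - c = c * (k * g - 1) := by rw [mul_sub, ← mul_assoc, hck, one_mul, mul_one]
  show _ ∈ er.Epos
  rw [hsplit]
  exact er.mul_mem_Epos hc hkg (hc_central _)

end CentralScalar

lemma exists_inverse_mem_CC_of_one_le_nsmul (hhalf : ∃ e ∈ er.E, e + e = 1) (hCV : er.HasCV)
    {g : R} (hg : g ∈ er.Epos) {M : ℕ} (hM : er.le 1 (M • g)) :
    ∃ h ∈ er.Epos, g * h = 1 ∧ h * g = 1 ∧ h ∈ er.CC {g} := by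
  obtain ⟨N, hN⟩ := er.exists_le_natCast hg
  obtain ⟨c, hc, hc_central, k, hk, hck⟩ := er.exists_central_mul_natCast_eq_one hhalf (M + N)
  have ht : 1 - c * g ∈ er.Epos := er.mul_le_one_of_le_natCast hc hc_central hck (by omega) hN
  have hcg : 1 - (1 - c * g) - c * c ∈ er.Epos := by
    have hsplit : 1 - (1 - c * g) - c * c = c * (g - c) := by noncomm_ring
    rw [hsplit]
    exact er.mul_mem_Epos hc (er.le_of_one_le_nsmul hc hc_central hck (by omega) hg hM)
      (hc_central _)
  have hck2 : ((k * k : ℕ) : R) * (c * c) = 1 := by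
    rw [Nat.cast_mul, mul_assoc, ← mul_assoc (k : R) c c, ← (hc_central k).eq, hck, one_mul,
      ← (hc_central k).eq, hck]
  have hcomm_t : ∀ x, Commute x g → Commute x (1 - c * g) := fun x hx =>
    (Commute.one_right x).sub_right ((hc_central x).symm.mul_right hx)
  obtain ⟨σ, hσ, hσ_inv, hσ_comm⟩ := er.exists_inv_one_sub_of_geom_sum_le hCV ht
    (by rw [sub_sub_cancel]; exact er.mul_mem_Epos hc hg (hc_central g))
    (er.mem_G_of_mem_Epos (er.natCast_mem_Epos (k * k)))
    (er.geom_sum_le_natCast ht hcg ((hc_central _).mul_left (hc_central _)) hck2)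
  rw [sub_sub_cancel] at hσ_inv
  have hgσ : Commute g σ := hσ_comm g (er.mem_G_of_mem_Epos hg) (hcomm_t g (Commute.refl g))
  have hcσ : c * σ ∈ er.Epos := er.mul_mem_Epos hc hσ (hc_central σ)
  refine ⟨c * σ, hcσ, ?_, ?_, er.mem_G_of_mem_Epos hcσ, ?_⟩
  · rw [← mul_assoc, ← (hc_central g).eq, hσ_inv]
  · rw [mul_assoc, ← hgσ.eq, ← mul_assoc, hσ_inv]
  · rintro x ⟨hx, hxg⟩
    exact ((hc_central x).mul_left (hσ_comm x hx (hcomm_t x (hxg g rfl))).symm).eq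

end ERing

theorem stmt4_general {R : Type*} [Ring R] (er : ERing R) (hAH : er.IsAH)
    (g : R) (hg0 : er.le 0 g) :
    ((∃ h ∈ er.G, g * h = 1 ∧ h * g = 1) ↔ ∃ M : ℕ, er.le 1 (M • g)) ∧
    (∀ h ∈ er.G, g * h = 1 → h * g = 1 → er.le 0 h ∧ h ∈ er.CC {g}) := by
  obtain ⟨hhalf, -, hCV⟩ := hAH
  have hg : g ∈ er.Epos := by rwa [ERing.le, sub_zero] at hg0
  refine ⟨⟨fun ⟨h, hh, hgh, hhg⟩ => er.exists_one_le_nsmul_of_mul_eq_one hg hh hgh hhg,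
    fun ⟨M, hM⟩ => ?_⟩, fun h hh hgh hhg => ?_⟩
  · obtain ⟨h, hh, hgh, hhg, -⟩ := er.exists_inverse_mem_CC_of_one_le_nsmul hhalf hCV hg hM
    exact ⟨h, er.mem_G_of_mem_Epos hh, hgh, hhg⟩
  · obtain ⟨M, hM⟩ := er.exists_one_le_nsmul_of_mul_eq_one hg hh hgh hhg
    obtain ⟨h₀, hh₀, hgh₀, -, hh₀_CC⟩ := er.exists_inverse_mem_CC_of_one_le_nsmul hhalf hCV hg hM
    obtain rfl : h = h₀ := left_inv_eq_right_inv hhg hgh₀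
    exact ⟨by rwa [ERing.le, sub_zero], hh₀_CC⟩

/-- In an AH-algebra, `0 ≤ g` is invertible iff `1 ≤ M·g` for some
`M ∈ ℕ`; moreover if `g` is invertible then `0 ≤ g⁻¹ ∈ CC(g)`. -/
theorem stmt4 {R : Type*} [Ring R] (er : ERing R) (hAH : er.IsAH)
    (g : R) (hg : g ∈ er.G) (hg0 : er.le 0 g) :
    ((∃ h ∈ er.G, g * h = 1 ∧ h * g = 1) ↔ ∃ M : ℕ, er.le 1 (M • g)) ∧
    (∀ h ∈ er.G, g * h = 1 → h * g = 1 → er.le 0 h ∧ h ∈ er.CC {g}) :=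
  stmt4_general er hAH g hg0
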